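/- If the judgement M : τ in context Γ is derivable in system SM, then |Γ| = sup(M) and, for every 1 ≤ i ≤ |Γ|, Γ_i ≠ ω if and only if i ∈ FI(M). -/

import Mathlib

set_option maxHeartbeats 1000000

namespace DBIT

/-- Terms of the λ_dB-calculus.  `var k` denotes the de Bruijn index `k+1`
(de Bruijn indices are *positive* natural numbers). -/
inductive Tm : Type
  | var : ℕ → Tm
  | app : Tm → Tm → Tm
  | lam : Tm → Tm
deriving DecidableEq

/-- The set of free indices of a term. -/
def FI : Tm → Finset ℕ
  | .var k => {k + 1}
  | .app M N => FI M ∪ FI N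
  | .lam M => ((FI M).filter (fun n => 1 < n)).image (fun n => n - 1)

/-- `supFI M` is the greatest free index of `M` (and `0` if `FI M = ∅`). -/
def supFI (M : Tm) : ℕ := (FI M).sup id

/-- Lift with cut-off: increment all indices that are free under `k` binders. -/
def liftRec (k : ℕ) : Tm → Tm
  | .var n => if k ≤ n then .var (n + 1) else .var n
  | .app M N => .app (liftRec k M) (liftRec k N)
  | .lam M => .lam (liftRec (k + 1) M)

/-- The lift `M⁺` of `M`: increment all free indices by one. -/
def lift (M : Tm) : Tm := liftRec 0 M

/-- β-substitution: `subst k N M` is `{k+1 / N} M`. -/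
def subst (k : ℕ) (N : Tm) : Tm → Tm
  | .app M1 M2 => .app (subst k N M1) (subst k N M2)
  | .lam M1 => .lam (subst (k + 1) (lift N) M1)
  | .var m => if k < m then .var (m - 1) else if m = k then N else .var m

/-- One-step β-reduction: the compatible closure of the β-contraction
`(λ.M) N →β {1/N} M`. -/
inductive Beta : Tm → Tm → Prop
  | beta (M N : Tm) : Beta (.app (.lam M) N) (subst 0 N M)
  | appL {M M' : Tm} (N : Tm) : Beta M M' → Beta (.app M N) (.app M' N)
  | appR (M : Tm) {N N' : Tm} : Beta N N' → Beta (.app M N) (.app M N')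
  | lam {M M' : Tm} : Beta M M' → Beta (.lam M) (.lam M')

/-- A term is a β-normal form when no β-reduction applies to it. -/
def IsNF (M : Tm) : Prop := ∀ N, ¬ Beta M N

/-- `appList h [N1, …, Nm] = (h N1 ⋯ Nm)`. -/
def appList (h : Tm) (Ns : List Tm) : Tm := Ns.foldl .app h

/-! ### Restricted intersection types -/

mutual
  /-- The set `T` of restricted intersection types: `τ ::= α | u → τ`. -/
  inductive Ty : Type
    | tvar : ℕ → Ty
    | arr : IU → Ty → Ty
  /-- The set `U`: `u ::= ω | u ∧ u | τ`. -/
  inductive IU : Type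
    | omega : IU
    | inter : IU → IU → IU
    | ofTy : Ty → IU
end

mutual
  /-- Equality of types in the quotient by commutativity/associativity of `∧`
  and neutrality of `ω`. -/
  inductive TyEq : Ty → Ty → Prop
    | refl (τ) : TyEq τ τ
    | symm {τ σ} : TyEq τ σ → TyEq σ τ
    | trans {τ σ ρ} : TyEq τ σ → TyEq σ ρ → TyEq τ ρ
    | arr {u v τ σ} : UEq u v → TyEq τ σ → TyEq (.arr u τ) (.arr v σ)
  /-- Equality of `U`-elements in the quotient: `∧` is commutative, associative
  and has `ω` as neutral element. -/
  inductive UEq : IU → IU → Prop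
    | refl (u) : UEq u u
    | symm {u v} : UEq u v → UEq v u
    | trans {u v w} : UEq u v → UEq v w → UEq u w
    | comm (u v) : UEq (.inter u v) (.inter v u)
    | assoc (u v w) : UEq (.inter (.inter u v) w) (.inter u (.inter v w))
    | omega_left (u) : UEq (.inter .omega u) u
    | inter {u u' v v'} : UEq u u' → UEq v v' → UEq (.inter u v) (.inter u' v')
    | ofTy {τ σ} : TyEq τ σ → UEq (.ofTy τ) (.ofTy σ)
end

/-- Contexts: finite lists of elements of `U`. -/
abbrev Ctx := List IU

/-- Equality of contexts in the quotient (componentwise). -/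
def CtxEq (Γ Δ : Ctx) : Prop := List.Forall₂ UEq Γ Δ

/-- The extension of `∧` to contexts (with `nil` neutral). -/
def ctxAnd : Ctx → Ctx → Ctx
  | [], Δ => Δ
  | u :: Γ, [] => u :: Γ
  | u :: Γ, v :: Δ => .inter u v :: ctxAnd Γ Δ

/-- `ω^n`: the context consisting of `n` copies of `ω`. -/
def omegas (n : ℕ) : Ctx := List.replicate n .omega

/-- `arrChain [σ1,…,σm] τ = σ1 → ⋯ → σm → τ`. -/
def arrChain (σs : List Ty) (τ : Ty) : Ty := σs.foldr (fun σ t => .arr (.ofTy σ) t) τ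

/-- `interOf [σ1,…,σn] = σ1 ∧ ⋯ ∧ σn` (and `ω` for the empty list). -/
def interOf : List Ty → IU
  | [] => .omega
  | σ :: σs => σs.foldl (fun u τ => .inter u (.ofTy τ)) (.ofTy σ)

mutual
  /-- Type variables occurring in a type. -/
  def tvT : Ty → Finset ℕ
    | .tvar a => {a}
    | .arr u τ => tvU u ∪ tvT τ
  /-- Type variables occurring in a `U`-element. -/
  def tvU : IU → Finset ℕ
    | .omega => ∅
    | .inter u v => tvU u ∪ tvU v
    | .ofTy τ => tvT τ
end

/-- Type variables occurring in a context. -/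
def tvC (Γ : Ctx) : Finset ℕ := Γ.foldr (fun u s => tvU u ∪ s) ∅

mutual
  /-- Application of a type substitution to a type. -/
  def substT (s : ℕ → Ty) : Ty → Ty
    | .tvar a => s a
    | .arr u τ => .arr (substU s u) (substT s τ)
  /-- Application of a type substitution to a `U`-element. -/
  def substU (s : ℕ → Ty) : IU → IU
    | .omega => .omega
    | .inter u v => .inter (substU s u) (substU s v)
    | .ofTy τ => .ofTy (substT s τ)
end

/-- Application of a type substitution to a context. -/
def substC (s : ℕ → Ty) (Γ : Ctx) : Ctx := Γ.map (substU s)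

/-! ### The typing systems SM and SM_r

Since types are quotiented by commutativity/associativity of `∧` and
neutrality of `ω`, the systems include a conversion rule for this
equality of types/contexts. -/

/-- The typing system `SM`.  Recall that `Tm.var k` is the de Bruijn index `k+1`. -/
inductive SM : Tm → Ctx → Ty → Prop
  | var (τ : Ty) : SM (.var 0) [.ofTy τ] τ
  | varn {k Γ τ} : SM (.var k) Γ τ → SM (.var (k + 1)) (.omega :: Γ) τ
  | arrI {M u Γ τ} : SM M (u :: Γ) τ → SM (.lam M) Γ (.arr u τ)
  | arrI' {M τ} : SM M [] τ → SM (.lam M) [] (.arr .omega τ)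
  | arrE' {M1 M2 Γ Δ τ σ} : SM M1 Γ (.arr .omega τ) → SM M2 Δ σ →
      SM (.app M1 M2) (ctxAnd Γ Δ) τ
  | arrE {M1 M2 : Tm} {Γ : Ctx} {τ : Ty} (σs : List Ty) (Δs : List Ctx)
      (hne : σs ≠ []) (hlen : Δs.length = σs.length)
      (h1 : SM M1 Γ (.arr (interOf σs) τ))
      (h2 : ∀ i, i < σs.length → SM M2 (Δs.getD i []) (σs.getD i (.tvar 0))) :
      SM (.app M1 M2) (Δs.foldl ctxAnd Γ) τ
  | conv {M Γ Γ' τ τ'} : SM M Γ τ → CtxEq Γ Γ' → TyEq τ τ' → SM M Γ' τ'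

/-- The typing system `SM_r`: as `SM` but with rule (var) replaced by (var_r). -/
inductive SMr : Tm → Ctx → Ty → Prop
  | varr (σs : List Ty) (a : ℕ) :
      SMr (.var 0) [.ofTy (arrChain σs (.tvar a))] (arrChain σs (.tvar a))
  | varn {k Γ τ} : SMr (.var k) Γ τ → SMr (.var (k + 1)) (.omega :: Γ) τ
  | arrI {M u Γ τ} : SMr M (u :: Γ) τ → SMr (.lam M) Γ (.arr u τ)
  | arrI' {M τ} : SMr M [] τ → SMr (.lam M) [] (.arr .omega τ)
  | arrE' {M1 M2 Γ Δ τ σ} : SMr M1 Γ (.arr .omega τ) → SMr M2 Δ σ →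
      SMr (.app M1 M2) (ctxAnd Γ Δ) τ
  | arrE {M1 M2 : Tm} {Γ : Ctx} {τ : Ty} (σs : List Ty) (Δs : List Ctx)
      (hne : σs ≠ []) (hlen : Δs.length = σs.length)
      (h1 : SMr M1 Γ (.arr (interOf σs) τ))
      (h2 : ∀ i, i < σs.length → SMr M2 (Δs.getD i []) (σs.getD i (.tvar 0))) :
      SMr (.app M1 M2) (Δs.foldl ctxAnd Γ) τ
  | conv {M Γ Γ' τ τ'} : SMr M Γ τ → CtxEq Γ Γ' → TyEq τ τ' → SMr M Γ' τ'

/-- The type variables of a typing (pair context/type). -/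
def tvP (Γ : Ctx) (τ : Ty) : Finset ℕ := tvC Γ ∪ tvT τ

/-- The type-inference algorithm `Infer` for β-normal forms, as a relation
(the algorithm is nondeterministic in the choice of the fresh type variables;
freshness is expressed by the disjointness side conditions). -/
inductive InferR : Tm → Ctx → Ty → Prop
  | var (k a : ℕ) : InferR (.var k) (omegas k ++ [.ofTy (.tvar a)]) (.tvar a)
  | lamCons {N : Tm} {u : IU} {Γ : Ctx} {σ : Ty} :
      InferR N (u :: Γ) σ → InferR (.lam N) Γ (.arr u σ)
  | lamNil {N : Tm} {σ : Ty} :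
      InferR N [] σ → InferR (.lam N) [] (.arr .omega σ)
  | app (k : ℕ) (Ns : List Tm) (Γs : List Ctx) (σs : List Ty) (a : ℕ)
      (hne : Ns ≠ [])
      (hlen1 : Γs.length = Ns.length) (hlen2 : σs.length = Ns.length)
      (h : ∀ i, i < Ns.length →
        InferR (Ns.getD i (.var 0)) (Γs.getD i []) (σs.getD i (.tvar 0)))
      (hdisj : ∀ i j, i < Ns.length → j < Ns.length → i ≠ j →
        Disjoint (tvP (Γs.getD i []) (σs.getD i (.tvar 0)))
                 (tvP (Γs.getD j []) (σs.getD j (.tvar 0))))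
      (ha : ∀ i, i < Ns.length → a ∉ tvP (Γs.getD i []) (σs.getD i (.tvar 0))) :
      InferR (appList (.var k) Ns)
        (Γs.foldl ctxAnd (omegas k ++ [.ofTy (arrChain σs (.tvar a))]))
        (.tvar a)

/-! ### The subsets T_C, T_NF, U_C and C-types -/

mutual
  /-- `ρ ∈ T_C ::= α | φ→ρ` with `φ ∈ T_NF`. -/
  inductive IsTC : Ty → Prop
    | tvar (a : ℕ) : IsTC (.tvar a)
    | arr {φ ρ} : IsTNF φ → IsTC ρ → IsTC (.arr (.ofTy φ) ρ)
  /-- `φ ∈ T_NF ::= α | v→φ` with `v ∈ U_C`. -/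
  inductive IsTNF : Ty → Prop
    | tvar (a : ℕ) : IsTNF (.tvar a)
    | arr {v φ} : IsUC v → IsTNF φ → IsTNF (.arr v φ)
  /-- `v ∈ U_C ::= ω | v∧v | ρ` with `ρ ∈ T_C`. -/
  inductive IsUC : IU → Prop
    | omega : IsUC .omega
    | inter {u v} : IsUC u → IsUC v → IsUC (.inter u v)
    | ofTy {ρ} : IsTC ρ → IsUC (.ofTy ρ)
end

/-- `Γ ∈ C`: all elements of `Γ` lie in `U_C`. -/
def IsCCtx (Γ : Ctx) : Prop := ∀ u ∈ Γ, IsUC u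

/-- C-types: `tj Γ φ` is `Γ ⊢ φ` and `cj Δ` is `Δ ⊢`. -/
inductive CTy : Type
  | tj : Ctx → Ty → CTy
  | cj : Ctx → CTy

mutual
  /-- Number of positive occurrences of the variable `a` in a type. -/
  def posT : Ty → ℕ → ℕ
    | .tvar b, a => if b = a then 1 else 0
    | .arr u τ, a => negU u a + posT τ a
  /-- Number of negative occurrences of the variable `a` in a type. -/
  def negT : Ty → ℕ → ℕ
    | .tvar _, _ => 0
    | .arr u τ, a => posU u a + negT τ a
  /-- Number of positive occurrences of the variable `a` in a `U`-element. -/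
  def posU : IU → ℕ → ℕ
    | .omega, _ => 0
    | .inter u v, a => posU u a + posU v a
    | .ofTy τ, a => posT τ a
  /-- Number of negative occurrences of the variable `a` in a `U`-element. -/
  def negU : IU → ℕ → ℕ
    | .omega, _ => 0
    | .inter u v, a => negU u a + negU v a
    | .ofTy τ, a => negT τ a
end

/-- Positive occurrences in a context. -/
def posC (Γ : Ctx) (a : ℕ) : ℕ := (Γ.map (fun u => posU u a)).sum
/-- Negative occurrences in a context. -/
def negC (Γ : Ctx) (a : ℕ) : ℕ := (Γ.map (fun u => negU u a)).sum

/-- Positive occurrences of a variable in a C-type (polarity is flipped in the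
context part). -/
def posCT : CTy → ℕ → ℕ
  | .tj Γ φ, a => negC Γ a + posT φ a
  | .cj Γ, a => negC Γ a

/-- Negative occurrences of a variable in a C-type. -/
def negCT : CTy → ℕ → ℕ
  | .tj Γ φ, a => posC Γ a + negT φ a
  | .cj Γ, a => posC Γ a

/-- Type variables of a C-type. -/
def tvCT : CTy → Finset ℕ
  | .tj Γ φ => tvC Γ ∪ tvT φ
  | .cj Γ => tvC Γ

/-- A C-type is closed when each of its type variables has exactly one positive
and exactly one negative occurrence. -/
def IsClosed (T : CTy) : Prop := ∀ a ∈ tvCT T, posCT T a = 1 ∧ negCT T a = 1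

/-- The final (rightmost) type-variable occurrence of a type. -/
def finalT : Ty → ℕ
  | .tvar a => a
  | .arr _ φ => finalT φ

/-- The final (rightmost) type-variable occurrence of a `U`-element, if any. -/
def finalU : IU → Option ℕ
  | .omega => none
  | .inter u v => (finalU v).orElse (fun _ => finalU u)
  | .ofTy τ => some (finalT τ)

/-- Left subtypes of a type. -/
def Lty : Ty → Set IU
  | .tvar _ => ∅
  | .arr .omega φ => Lty φ
  | .arr v φ => insert v (Lty φ)

/-- Left subtypes of a context. -/
def Lctx : Ctx → Set IU
  | [] => ∅
  | .omega :: Γ => Lctx Γ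
  | v :: Γ => insert v (Lctx Γ)

/-- The set `L(T)` of left subtypes of a C-type. -/
def LCT : CTy → Set IU
  | .tj Γ φ => Lctx Γ ∪ Lty φ
  | .cj Γ => Lctx Γ

/-- A C-type `Γ ⊢ φ` is finally closed when the final occurrence of `φ` is
also the final occurrence of some type in `L(T)`. -/
def IsFC : CTy → Prop
  | .tj Γ φ => ∃ v ∈ LCT (.tj Γ φ), finalU v = some (finalT φ)
  | .cj _ => False

/-- Equality of C-types in the quotient. -/
def CTyEq : CTy → CTy → Prop
  | .tj Γ φ, .tj Δ ψ => CtxEq Γ Δ ∧ TyEq φ ψ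
  | .cj Γ, .cj Δ => CtxEq Γ Δ
  | _, _ => False

/-- `Γ` contains an element which is not (equal to) `ω`, i.e. `Γ` is not of the
form `ω^n` with `n ≥ 1` (nor `nil`). -/
def hasNonOmega (Γ : Ctx) : Prop := ∃ u ∈ Γ, ¬ UEq u .omega

/-- `Held T' T`: the C-type `T'` is held in `T = Γ ⊢ φ`, i.e. `T' = Γ' ⊢` or
`T' = Γ' ⊢ φ` with `Γ = Γ' ∧ Δ` for some context `Δ`, where `Γ'` is not of the
form `ω^n` (`Γ'` may be `nil` in the second case). -/
inductive Held : CTy → CTy → Prop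
  | cj {Γ' Δ Γ : Ctx} {φ : Ty} (hC : IsCCtx Γ') (hne : Γ' ≠ [])
      (hω : hasNonOmega Γ') (h : CtxEq Γ (ctxAnd Γ' Δ)) :
      Held (.cj Γ') (.tj Γ φ)
  | tj {Γ' Δ Γ : Ctx} {φ : Ty} (hC : IsCCtx Γ')
      (hω : Γ' = [] ∨ hasNonOmega Γ') (h : CtxEq Γ (ctxAnd Γ' Δ)) :
      Held (.tj Γ' φ) (.tj Γ φ)

/-- `T'` is strictly held in `T`. -/
def StrictlyHeld (T' T : CTy) : Prop := Held T' T ∧ ¬ CTyEq T' T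

/-- A C-type is minimally closed when no closed C-type is strictly held in it. -/
def IsMC (T : CTy) : Prop := ¬ ∃ T', StrictlyHeld T' T ∧ IsClosed T'

/-- A C-type is complete when it is closed, finally closed and minimally closed. -/
def IsComplete (T : CTy) : Prop := IsClosed T ∧ IsFC T ∧ IsMC T

/-- Principal C-types (Definition of principal). -/
inductive Principal : CTy → Prop
  | var (k a : ℕ)
      (hcomp : IsComplete (.tj (omegas k ++ [.ofTy (.tvar a)]) (.tvar a))) :
      Principal (.tj (omegas k ++ [.ofTy (.tvar a)]) (.tvar a))
  | lamNil {φ : Ty} (hcomp : IsComplete (.tj [] (.arr .omega φ)))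
      (hp : Principal (.tj [] φ)) :
      Principal (.tj [] (.arr .omega φ))
  | lam {Γ : Ctx} {v : IU} {φ : Ty} (hcomp : IsComplete (.tj Γ (.arr v φ)))
      (hcond : Γ ≠ [] ∨ ¬ UEq v .omega)
      (hp : Principal (.tj (v :: Γ) φ)) :
      Principal (.tj Γ (.arr v φ))
  | app {Γ : Ctx} {a : ℕ} (k : ℕ) (Γs : List Ctx) (φs : List Ty)
      (hcomp : IsComplete (.tj Γ (.tvar a)))
      (hne : φs ≠ []) (hlen : Γs.length = φs.length)
      (hC : ∀ Δ ∈ Γs, IsCCtx Δ)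
      (hΓ : CtxEq Γ (Γs.foldl ctxAnd (omegas k ++ [.ofTy (arrChain φs (.tvar a))])))
      (hp : ∀ i, i < φs.length →
        Principal (.tj (Γs.getD i []) (φs.getD i (.tvar 0)))) :
      Principal (.tj Γ (.tvar a))

/-- `FO(α, Γ)`: the set of pairs `(i, Γ_i)` (1-indexed) such that `α` is the
final occurrence of `Γ_i`. -/
def FO (a : ℕ) (Γ : Ctx) : Set (ℕ × IU) :=
  {p | 1 ≤ p.1 ∧ p.1 ≤ Γ.length ∧ p.2 = Γ.getD (p.1 - 1) .omega ∧
       finalU p.2 = some a}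

/-!
Induction on the derivation, carrying the invariant `Relevant Γ (FI M)`. Whether a context
entry equals `ω` modulo `UEq` is detected by counting its type leaves (`sizeU`): the count is
preserved by `UEq`, vanishes exactly on `ω`, and is additive under `∧`. Hence the conversion
rule preserves the invariant, and `∧` of contexts matches the union of free indices in the
application rules, while abstraction removes the head of the context as it shifts `FI` down.
-/

def sizeU : IU → ℕ
  | .omega => 0
  | .inter u v => sizeU u + sizeU v
  | .ofTy _ => 1

theorem sizeU_eq_of_uEq {u v : IU} (h : UEq u v) : sizeU u = sizeU v := by
  refine UEq.rec (motive_1 := fun _ _ _ => True) (motive_2 := fun u v _ => sizeU u = sizeU v)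
    ?_ ?_ ?_ ?_ ?_ ?_ ?_ ?_ ?_ ?_ ?_ ?_ h
  all_goals intros
  all_goals simp_all only [sizeU]
  all_goals omega

theorem uEq_omega_of_sizeU_eq_zero : ∀ {u : IU}, sizeU u = 0 → UEq u .omega
  | .omega, _ => .refl _
  | .inter _ _, h => by
    rw [sizeU, Nat.add_eq_zero_iff] at h
    exact .trans (.inter (uEq_omega_of_sizeU_eq_zero h.1) (uEq_omega_of_sizeU_eq_zero h.2))
      (.omega_left _)
  | .ofTy _, h => absurd h one_ne_zero

theorem not_uEq_omega_iff {u : IU} : ¬ UEq u .omega ↔ 0 < sizeU u := by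
  rw [Nat.pos_iff_ne_zero]
  exact not_congr ⟨sizeU_eq_of_uEq, uEq_omega_of_sizeU_eq_zero⟩

theorem sizeU_getD_eq_of_ctxEq {Γ Δ : Ctx} (h : CtxEq Γ Δ) (i : ℕ) :
    sizeU (Γ.getD i .omega) = sizeU (Δ.getD i .omega) := by
  induction h generalizing i with
  | nil => rfl
  | cons hu _ ih => cases i with
    | zero => exact sizeU_eq_of_uEq hu
    | succ i => exact ih i

theorem length_ctxAnd : ∀ Γ Δ : Ctx, (ctxAnd Γ Δ).length = max Γ.length Δ.length
  | [], _ => by simp [ctxAnd]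
  | _ :: _, [] => by simp [ctxAnd]
  | _ :: Γ, _ :: Δ => by simp [ctxAnd, length_ctxAnd Γ Δ]

theorem sizeU_getD_ctxAnd : ∀ (Γ Δ : Ctx) (i : ℕ),
    sizeU ((ctxAnd Γ Δ).getD i .omega) = sizeU (Γ.getD i .omega) + sizeU (Δ.getD i .omega)
  | [], _, _ => by simp [ctxAnd, sizeU]
  | _ :: _, [], _ => by simp [ctxAnd, sizeU]
  | _ :: _, _ :: _, 0 => by simp [ctxAnd, sizeU]
  | _ :: Γ, _ :: Δ, i + 1 => sizeU_getD_ctxAnd Γ Δ i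

/-- `FI (.lam M)` is `unbind (FI M)` definitionally. -/
def unbind (S : Finset ℕ) : Finset ℕ := (S.filter (1 < ·)).image (· - 1)

theorem mem_unbind {S : Finset ℕ} {i : ℕ} : i + 1 ∈ unbind S ↔ i + 2 ∈ S := by
  simp only [unbind, Finset.mem_image, Finset.mem_filter]
  constructor
  · rintro ⟨n, ⟨hn, _⟩, hi⟩
    rwa [show i + 2 = n by omega]
  · exact fun h => ⟨i + 2, ⟨h, by omega⟩, rfl⟩

theorem sup_unbind (S : Finset ℕ) : (unbind S).sup id = S.sup id - 1 := by
  rw [unbind, Finset.sup_image,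
    Finset.apply_sup_eq_sup_comp_of_linearOrder (· - 1) (fun _ _ h => Nat.sub_le_sub_right h 1) rfl]
  refine le_antisymm (Finset.sup_mono (Finset.filter_subset _ _)) (Finset.sup_le fun n hn => ?_)
  rcases Nat.lt_or_ge 1 n with h1 | h1
  · exact Finset.le_sup (f := id ∘ (· - 1)) (Finset.mem_filter.mpr ⟨hn, h1⟩)
  · simp [Nat.sub_eq_zero_of_le h1]

/-- Indices are counted from `1`, positions in `getD` from `0`: `Γ.getD i .omega` is `Γ_{i+1}`. -/
def Relevant (Γ : Ctx) (S : Finset ℕ) : Prop :=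
  Γ.length = S.sup id ∧ ∀ i, (0 < sizeU (Γ.getD i .omega) ↔ i + 1 ∈ S)

namespace Relevant

theorem singleton_ofTy (τ : Ty) : Relevant [.ofTy τ] {1} := by
  refine ⟨rfl, fun i => ?_⟩
  cases i <;> simp [sizeU]

theorem omega_cons {Γ : Ctx} {k : ℕ} (h : Relevant Γ {k + 1}) :
    Relevant (.omega :: Γ) {k + 2} := by
  refine ⟨by simp [h.1], fun i => ?_⟩
  cases i with
  | zero => simp [sizeU]
  | succ i => simpa using h.2 i

theorem nil_iff {S : Finset ℕ} : Relevant [] S ↔ S.sup id = 0 := by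
  refine ⟨fun h => h.1.symm, fun h => ⟨h.symm, fun i => ?_⟩⟩
  simp only [List.getD_nil, sizeU, lt_self_iff_false, false_iff]
  intro hi
  have : i + 1 ≤ S.sup id := Finset.le_sup (f := id) hi
  omega

theorem tail {u : IU} {Γ : Ctx} {S : Finset ℕ} (h : Relevant (u :: Γ) S) :
    Relevant Γ (unbind S) := by
  refine ⟨?_, fun i => ?_⟩
  · rw [sup_unbind, ← h.1, List.length_cons, Nat.add_sub_cancel]
  · rw [mem_unbind]
    exact h.2 (i + 1)

theorem unbind_nil {S : Finset ℕ} (h : Relevant [] S) : Relevant [] (unbind S) := by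
  rw [nil_iff, sup_unbind, nil_iff.mp h]

theorem ctxAnd {Γ Δ : Ctx} {S T : Finset ℕ} (hΓ : Relevant Γ S) (hΔ : Relevant Δ T) :
    Relevant (DBIT.ctxAnd Γ Δ) (S ∪ T) := by
  refine ⟨by rw [length_ctxAnd, hΓ.1, hΔ.1, Finset.sup_union], fun i => ?_⟩
  rw [sizeU_getD_ctxAnd, Finset.mem_union, ← hΓ.2 i, ← hΔ.2 i]
  omega

theorem foldl_ctxAnd {T : Finset ℕ} {Δs : List Ctx} (hne : Δs ≠ [])
    (hΔs : ∀ Δ ∈ Δs, Relevant Δ T) {Γ : Ctx} {S : Finset ℕ} (hΓ : Relevant Γ S) :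
    Relevant (Δs.foldl DBIT.ctxAnd Γ) (S ∪ T) := by
  induction Δs generalizing Γ S with
  | nil => exact absurd rfl hne
  | cons Δ Δs ih =>
    have hΓΔ := hΓ.ctxAnd (hΔs Δ List.mem_cons_self)
    rcases eq_or_ne Δs [] with rfl | hne'
    · exact hΓΔ
    · simpa [Finset.union_assoc] using
        ih hne' (fun D hD => hΔs D (List.mem_cons_of_mem _ hD)) hΓΔ

theorem of_ctxEq {Γ Γ' : Ctx} {S : Finset ℕ} (h : Relevant Γ S) (hΓ : CtxEq Γ Γ') :
    Relevant Γ' S :=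
  ⟨hΓ.length_eq ▸ h.1, fun i => sizeU_getD_eq_of_ctxEq hΓ i ▸ h.2 i⟩

end Relevant

theorem SM.relevant {M : Tm} {Γ : Ctx} {τ : Ty} (h : SM M Γ τ) : Relevant Γ (FI M) := by
  induction h with
  | var τ => exact .singleton_ofTy τ
  | varn _ ih => exact ih.omega_cons
  | arrI _ ih => exact ih.tail
  | arrI' _ ih => exact ih.unbind_nil
  | arrE' _ _ ih1 ih2 => exact ih1.ctxAnd ih2
  | arrE σs Δs hne hlen _ _ ih1 ih2 =>
    refine ih1.foldl_ctxAnd (List.ne_nil_of_length_pos (hlen ▸ List.length_pos_of_ne_nil hne))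
      fun Δ hΔ => ?_
    obtain ⟨i, hi, rfl⟩ := List.getElem_of_mem hΔ
    have := ih2 i (hlen ▸ hi)
    rwa [List.getD_eq_getElem _ _ hi] at this
  | conv _ hΓ _ ih => exact ih.of_ctxEq hΓ

/-- relevance of `SM`. -/
theorem sm_relevant {M : Tm} {Γ : Ctx} {τ : Ty} (h : SM M Γ τ) :
    Γ.length = supFI M ∧
    ∀ i, i < Γ.length →
      (¬ UEq (Γ.getD i .omega) .omega ↔ (i + 1) ∈ FI M) :=
  ⟨h.relevant.1, fun i _ => not_uEq_omega_iff.trans (h.relevant.2 i)⟩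

end DBIT
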